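/- Let f : ℝⁿ × ℝᵐ → ℝⁿ and φ : ℝⁿ × ℝᵐ → ℝᵏ be continuously differentiable. Let (q,u,p,λ) : [t₀,t₁] → ℝⁿ × ℝᵐ × ℝⁿ × ℝᵏ be a continuously differentiable solution of the adjoint DAE system: q̇ = f(q,u), ṗ = −D_qf(q,u)ᵀ p − D_qφ(q,u)ᵀ λ, 0 = φ(q,u), 0 = D_uf(q,u)ᵀ p + D_uφ(q,u)ᵀ λ, and let (δq, δu) : [t₀,t₁] → ℝⁿ × ℝᵐ be continuously differentiable curves satisfying the variational equations along (q,u): δq̇ = D_qf(q,u) δq + D_uf(q,u) δu and 0 = D_qφ(q,u) δq + D_uφ(q,u) δu. Then the function t ↦ ⟨p(t), δq(t)⟩ is constant on [t₀,t₁]. -/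

import Mathlib

open scoped RealInnerProductSpace

noncomputable section

abbrev Euc (n : ℕ) : Type := EuclideanSpace ℝ (Fin n)

/-- Partial Jacobian `D_qF(q,u)` with respect to the first argument. -/
noncomputable def Dq {n m k : ℕ} (F : Euc n × Euc m → Euc k) (q : Euc n) (u : Euc m) :
    Euc n →L[ℝ] Euc k :=
  fderiv ℝ (fun q' => F (q', u)) q

/-- Partial Jacobian `D_uF(q,u)` with respect to the second argument. -/
noncomputable def Du {n m k : ℕ} (F : Euc n × Euc m → Euc k) (q : Euc n) (u : Euc m) :
    Euc m →L[ℝ] Euc k :=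
  fderiv ℝ (fun u' => F (q, u')) u

/-- `D_qF(q,u)ᵀ`, the transpose (adjoint) of the partial Jacobian in `q`. -/
noncomputable def DqT {n m k : ℕ} (F : Euc n × Euc m → Euc k) (q : Euc n) (u : Euc m) :
    Euc k →L[ℝ] Euc n :=
  ContinuousLinearMap.adjoint (Dq F q u)

/-- `D_uF(q,u)ᵀ`, the transpose (adjoint) of the partial Jacobian in `u`. -/
noncomputable def DuT {n m k : ℕ} (F : Euc n × Euc m → Euc k) (q : Euc n) (u : Euc m) :
    Euc k →L[ℝ] Euc m :=
  ContinuousLinearMap.adjoint (Du F q u)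

/-- Partial gradient `∇_qL(q,u)`. -/
noncomputable def gradQ {n m : ℕ} (L : Euc n × Euc m → ℝ) (q : Euc n) (u : Euc m) : Euc n :=
  gradient (fun q' => L (q', u)) q

/-- Partial gradient `∇_uL(q,u)`. -/
noncomputable def gradU {n m : ℕ} (L : Euc n × Euc m → ℝ) (q : Euc n) (u : Euc m) : Euc m :=
  gradient (fun u' => L (q, u')) u

section AdjointPairing

variable {E U K : Type*}
  [NormedAddCommGroup E] [InnerProductSpace ℝ E] [CompleteSpace E]
  [NormedAddCommGroup U] [InnerProductSpace ℝ U] [CompleteSpace U]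
  [NormedAddCommGroup K] [InnerProductSpace ℝ K] [CompleteSpace K]

open ContinuousLinearMap in
/-- For `A = D_qf`, `B = D_uf`, `C = D_qφ`, `D = D_uφ` the left side is `d/dt ⟨p, δq⟩`. -/
theorem inner_adjoint_add_inner_variational_eq_zero
    (A : E →L[ℝ] E) (B : U →L[ℝ] E) (C : E →L[ℝ] K) (D : U →L[ℝ] K)
    {p x : E} {w : U} {μ : K}
    (hadj : adjoint B p + adjoint D μ = 0) (hvar : C x + D w = 0) :
    ⟪p, A x + B w⟫ + ⟪-(adjoint A p) - adjoint C μ, x⟫ = 0 := by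
  have hB : ⟪p, B w⟫ = -⟪μ, D w⟫ := by
    have := congrArg (⟪·, w⟫) hadj
    simp only [inner_add_left, adjoint_inner_left, inner_zero_left] at this
    linarith
  have hC : ⟪μ, C x⟫ = -⟪μ, D w⟫ := by
    rw [eq_neg_of_add_eq_zero_left hvar, inner_neg_right]
  simp only [inner_add_right, inner_sub_left, inner_neg_left, adjoint_inner_left, hB, hC]
  ring

end AdjointPairing

theorem eq_of_hasDerivAt_eq_zero_on_Icc {F : Type*} [NormedAddCommGroup F] [NormedSpace ℝ F]
    {g : ℝ → F} {a b : ℝ} (hg : ∀ t ∈ Set.Icc a b, HasDerivAt g 0 t) :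
    ∀ s ∈ Set.Icc a b, ∀ t ∈ Set.Icc a b, g s = g t := by
  have hconst := constant_of_has_deriv_right_zero
    (fun t ht => (hg t ht).continuousAt.continuousWithinAt)
    (fun t ht => (hg t (Set.Ico_subset_Icc_self ht)).hasDerivWithinAt)
  intro s hs t ht
  rw [hconst s hs, hconst t ht]

theorem adjoint_DAE_quadratic_invariant_general {n m k : ℕ}
    (f : Euc n × Euc m → Euc n) (φ : Euc n × Euc m → Euc k)
    (t₀ t₁ : ℝ)
    (q : ℝ → Euc n) (u : ℝ → Euc m) (p : ℝ → Euc n) (lam : ℝ → Euc k)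
    (δq : ℝ → Euc n) (δu : ℝ → Euc m)
    (hpode : ∀ t ∈ Set.Icc t₀ t₁,
      HasDerivAt p (-(DqT f (q t) (u t) (p t)) - DqT φ (q t) (u t) (lam t)) t)
    (hadj : ∀ t ∈ Set.Icc t₀ t₁,
      DuT f (q t) (u t) (p t) + DuT φ (q t) (u t) (lam t) = 0)
    (hδqode : ∀ t ∈ Set.Icc t₀ t₁,
      HasDerivAt δq (Dq f (q t) (u t) (δq t) + Du f (q t) (u t) (δu t)) t)
    (hδconstr : ∀ t ∈ Set.Icc t₀ t₁,
      Dq φ (q t) (u t) (δq t) + Du φ (q t) (u t) (δu t) = 0) :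
    ∀ s ∈ Set.Icc t₀ t₁, ∀ t ∈ Set.Icc t₀ t₁, ⟪p s, δq s⟫ = ⟪p t, δq t⟫ := by
  refine eq_of_hasDerivAt_eq_zero_on_Icc fun t ht => ?_
  have hzero := inner_adjoint_add_inner_variational_eq_zero (Dq f (q t) (u t))
    (Du f (q t) (u t)) (Dq φ (q t) (u t)) (Du φ (q t) (u t)) (hadj t ht) (hδconstr t ht)
  exact ((hpode t ht).inner ℝ (hδqode t ht)).congr_deriv hzero

/-- along a solution of the adjoint DAE system and a solution of the
variational equations covering the same `(q,u)`, the pairing `⟨p(t), δq(t)⟩`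
is constant on `[t₀, t₁]`. -/
theorem adjoint_DAE_quadratic_invariant {n m k : ℕ}
    (f : Euc n × Euc m → Euc n) (φ : Euc n × Euc m → Euc k)
    (hf : ContDiff ℝ 1 f) (hφ : ContDiff ℝ 1 φ)
    (t₀ t₁ : ℝ)
    (q : ℝ → Euc n) (u : ℝ → Euc m) (p : ℝ → Euc n) (lam : ℝ → Euc k)
    (δq : ℝ → Euc n) (δu : ℝ → Euc m)
    (hq : ContDiff ℝ 1 q) (hu : ContDiff ℝ 1 u) (hp : ContDiff ℝ 1 p)
    (hlam : ContDiff ℝ 1 lam) (hδq : ContDiff ℝ 1 δq) (hδu : ContDiff ℝ 1 δu)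
    (hqode : ∀ t ∈ Set.Icc t₀ t₁, HasDerivAt q (f (q t, u t)) t)
    (hpode : ∀ t ∈ Set.Icc t₀ t₁,
      HasDerivAt p (-(DqT f (q t) (u t) (p t)) - DqT φ (q t) (u t) (lam t)) t)
    (hconstr : ∀ t ∈ Set.Icc t₀ t₁, φ (q t, u t) = 0)
    (hadj : ∀ t ∈ Set.Icc t₀ t₁,
      DuT f (q t) (u t) (p t) + DuT φ (q t) (u t) (lam t) = 0)
    (hδqode : ∀ t ∈ Set.Icc t₀ t₁,
      HasDerivAt δq (Dq f (q t) (u t) (δq t) + Du f (q t) (u t) (δu t)) t)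
    (hδconstr : ∀ t ∈ Set.Icc t₀ t₁,
      Dq φ (q t) (u t) (δq t) + Du φ (q t) (u t) (δu t) = 0) :
    ∀ s ∈ Set.Icc t₀ t₁, ∀ t ∈ Set.Icc t₀ t₁, ⟪p s, δq s⟫ = ⟪p t, δq t⟫ :=
  adjoint_DAE_quadratic_invariant_general f φ t₀ t₁ q u p lam δq δu hpode hadj hδqode hδconstr

end
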